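/- Let Λ be a numerical semigroup with multiplicity m ≥ 3 whose left elements have gcd d ≠ 1. Then Λ has at least one child that does not lie in an infinite chain; equivalently, not all children of Λ have left-element gcd different from 1. -/
import Mathlib


def IsNumSgp (S : Set ℕ) : Prop :=
  0 ∈ S ∧ (∀ a ∈ S, ∀ b ∈ S, a + b ∈ S) ∧ Sᶜ.Finite

noncomputable def multNS (S : Set ℕ) : ℕ := sInf {x | x ∈ S ∧ x ≠ 0}

noncomputable def condNS (S : Set ℕ) : ℕ := sInf {c : ℕ | ∀ n, c ≤ n → n ∈ S}

noncomputable def genusNS (S : Set ℕ) : ℕ := Sᶜ.ncard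

def IsMinGen (S : Set ℕ) (a : ℕ) : Prop :=
  a ∈ S ∧ a ≠ 0 ∧ ¬ ∃ x ∈ S, ∃ y ∈ S, x ≠ 0 ∧ y ≠ 0 ∧ x + y = a

def leftElts (S : Set ℕ) : Set ℕ := {x | x ∈ S ∧ x < condNS S}

def IsOrdinary (S : Set ℕ) : Prop := ∃ m : ℕ, S = {0} ∪ {n | m ≤ n}

def IsChild (S C : Set ℕ) : Prop :=
  ∃ a, IsMinGen S a ∧ condNS S ≤ a ∧ C = S \ {a}

def IsDescendant (S T : Set ℕ) : Prop := Relation.ReflTransGen IsChild S T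

def pushNS (m : ℕ) (S : Set ℕ) : Set ℕ := {0} ∪ (fun x => m + x) '' S

lemma condNS_spec {S : Set ℕ} (h : IsNumSgp S) : ∀ n, condNS S ≤ n → n ∈ S := by
  obtain ⟨N, hN⟩ := h.2.2.bddAbove
  have hmem : (N + 1) ∈ {c : ℕ | ∀ n, c ≤ n → n ∈ S} := by
    intro n hn
    by_contra hns
    exact absurd (hN hns) (by omega)
  exact Nat.sInf_mem ⟨N + 1, hmem⟩

lemma multNS_mem {S : Set ℕ} (h : IsNumSgp S) : multNS S ∈ S ∧ multNS S ≠ 0 := by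
  have hmem : condNS S + 1 ∈ {x | x ∈ S ∧ x ≠ 0} :=
    ⟨condNS_spec h _ (by omega), by omega⟩
  exact Nat.sInf_mem ⟨_, hmem⟩

lemma multNS_le {S : Set ℕ} (x : ℕ) (hx : x ∈ S) (hx0 : x ≠ 0) : multNS S ≤ x :=
  Nat.sInf_le ⟨hx, hx0⟩

lemma multNS_le_condNS {S : Set ℕ} (h : IsNumSgp S) (hm : 3 ≤ multNS S) :
    multNS S ≤ condNS S := by
  by_contra hlt
  push_neg at hlt
  have h1 : multNS S - 1 ∈ S := condNS_spec h _ (by omega)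
  have := multNS_le (S := S) _ h1 (by omega)
  omega

lemma condNS_child {S : Set ℕ} (h : IsNumSgp S) (a : ℕ) (ha : condNS S ≤ a) :
    condNS (S \ {a}) = a + 1 := by
  have hub : (a + 1) ∈ {c : ℕ | ∀ n, c ≤ n → n ∈ S \ {a}} := by
    intro n hn
    exact ⟨condNS_spec h n (by omega), by simp; omega⟩
  refine le_antisymm (Nat.sInf_le hub) ?_
  show a + 1 ≤ sInf {c : ℕ | ∀ n, c ≤ n → n ∈ S \ {a}}
  by_contra hlt
  push_neg at hlt
  have hmem := Nat.sInf_mem (⟨a + 1, hub⟩ : Set.Nonempty {c : ℕ | ∀ n, c ≤ n → n ∈ S \ {a}})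
  have : a ∈ S \ {a} := hmem a (by omega)
  simp at this

lemma minGen_lemma {S : Set ℕ} (h : IsNumSgp S) (d j : ℕ)
    (hdiv : ∀ x ∈ leftElts S, d ∣ x) (hj : 0 < j) (hjm : j < multNS S)
    (hnd : ¬ d ∣ condNS S + j) : IsMinGen S (condNS S + j) := by
  refine ⟨condNS_spec h _ (by omega), by omega, ?_⟩
  rintro ⟨x, hx, y, hy, hx0, hy0, hxy⟩
  have hxm := multNS_le x hx hx0
  have hym := multNS_le y hy hy0
  have hxc : x < condNS S := by omega
  have hyc : y < condNS S := by omega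
  have dx := hdiv x ⟨hx, hxc⟩
  have dy := hdiv y ⟨hy, hyc⟩
  exact hnd (hxy ▸ Nat.dvd_add dx dy)

lemma caseA {S : Set ℕ} (h : IsNumSgp S) (j : ℕ) (hj : 2 ≤ j)
    (hgen : IsMinGen S (condNS S + j)) :
    ∃ C, IsChild S C ∧ ∀ e : ℕ, (∀ x ∈ leftElts C, e ∣ x) → e = 1 := by
  refine ⟨S \ {condNS S + j}, ⟨_, hgen, by omega, rfl⟩, ?_⟩
  intro e he
  have hcond := condNS_child h (condNS S + j) (by omega)
  have h1 : condNS S ∈ leftElts (S \ {condNS S + j}) := by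
    refine ⟨⟨condNS_spec h _ le_rfl, by simp; omega⟩, ?_⟩
    rw [hcond]; omega
  have h2 : condNS S + 1 ∈ leftElts (S \ {condNS S + j}) := by
    refine ⟨⟨condNS_spec h _ (by omega), by simp; omega⟩, ?_⟩
    rw [hcond]; omega
  have e1 := he _ h1
  have e2 := he _ h2
  have he1 : e ∣ 1 := by
    have h3 := Nat.dvd_sub e2 e1
    have h4 : condNS S + 1 - condNS S = 1 := by omega
    rwa [h4] at h3
  exact Nat.dvd_one.mp he1

theorem stmt9 (S : Set ℕ) (h : IsNumSgp S) (hm : 3 ≤ multNS S)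
    (hd : ∃ d : ℕ, 1 < d ∧ ∀ x ∈ leftElts S, d ∣ x) :
    ∃ C, IsChild S C ∧ ∀ e : ℕ, (∀ x ∈ leftElts C, e ∣ x) → e = 1 := by
  obtain ⟨d, hd1, hdiv⟩ := hd
  have hmS := multNS_mem h
  have hmc := multNS_le_condNS h hm
  by_cases hord : condNS S ≤ multNS S
  · -- ordinary case: leftElts S = {0}
    have hdiv' : ∀ x ∈ leftElts S, (condNS S + 3) ∣ x := by
      intro x hx
      have hx0 : x = 0 := by
        by_contra hx0
        have := multNS_le x hx.1 hx0
        have := hx.2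
        omega
      simp [hx0]
    have hnd : ¬ (condNS S + 3) ∣ condNS S + 2 := by
      intro hdd
      have := Nat.le_of_dvd (by omega) hdd
      omega
    exact caseA h 2 le_rfl (minGen_lemma h _ 2 hdiv' (by omega) (by omega) hnd)
  · push_neg at hord
    have hdm : d ∣ multNS S := hdiv _ ⟨hmS.1, hord⟩
    by_cases h2 : d ∣ condNS S + 2
    · by_cases hm4 : 4 ≤ multNS S
      · have hnd : ¬ d ∣ condNS S + 3 := by
          intro hdd
          have h3 := Nat.dvd_sub hdd h2
          have h4 : condNS S + 3 - (condNS S + 2) = 1 := by omega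
          rw [h4] at h3
          have := Nat.dvd_one.mp h3
          omega
        exact caseA h 3 (by omega) (minGen_lemma h d 3 hdiv (by omega) (by omega) hnd)
      · -- multiplicity 3, d = 3, 3 ∣ c + 2, take a = c + 1
        have hm3 : multNS S = 3 := by omega
        have hd3 : d = 3 := by
          rcases (Nat.prime_three.eq_one_or_self_of_dvd d (hm3 ▸ hdm)) with h1 | h1 <;> omega
        have h2' : (3 : ℕ) ∣ condNS S + 2 := hd3 ▸ h2
        have hnd1 : ¬ (3 : ℕ) ∣ condNS S + 1 := by omega
        have hgen := minGen_lemma h 3 1 (hd3 ▸ hdiv) (by omega) (by omega) hnd1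
        refine ⟨S \ {condNS S + 1}, ⟨_, hgen, by omega, rfl⟩, ?_⟩
        intro e he
        have hcond := condNS_child h (condNS S + 1) (by omega)
        have hmem1 : multNS S ∈ leftElts (S \ {condNS S + 1}) := by
          refine ⟨⟨hmS.1, by simp; omega⟩, ?_⟩
          rw [hcond]; omega
        have hmem2 : condNS S ∈ leftElts (S \ {condNS S + 1}) := by
          refine ⟨⟨condNS_spec h _ le_rfl, by simp⟩, ?_⟩
          rw [hcond]; omega
        have e3 : e ∣ 3 := hm3 ▸ he _ hmem1
        have ec := he _ hmem2
        rcases (Nat.prime_three.eq_one_or_self_of_dvd e e3) with h1 | h1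
        · exact h1
        · exfalso
          subst h1
          omega
    · exact caseA h 2 le_rfl (minGen_lemma h d 2 hdiv (by omega) (by omega) h2)
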